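/- arXiv:1506.07587 — 6 statements merged into one kernel-verified Lean document; each statement's English description precedes it below -/
import Mathlib

section
/- For any element n of a finitely generated reduced cancellative commutative monoid S with at least two factorizations, and for every factorization a of n, there exists another factorization a' of n such that the distance d(a, a') is at least b, where b is the minimum catenary degree among all Betti elements of S dividing n. -/
/-- The set of factorizations of `n` in terms of the generators `gens`. -/
def ZsetM {S : Type*} [AddCancelCommMonoid S] {k : ℕ} (gens : Fin k → S) (n : S) :
    Set (Fin k → ℕ) :=
  {a | ∑ i, a i • gens i = n}

/-- The length of a factorization. -/
def flen {k : ℕ} (a : Fin k → ℕ) : ℕ := ∑ i, a i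

/-- The distance between two factorizations:
`max (|a - gcd(a,b)|, |b - gcd(a,b)|)` (componentwise gcd = min). -/
def fdist {k : ℕ} (a b : Fin k → ℕ) : ℕ :=
  max (∑ i, (a i - b i)) (∑ i, (b i - a i))

/-- There is an `N`-chain of factorizations within `Z` from `a` to `b`. -/
def IsNChain {k : ℕ} (Z : Set (Fin k → ℕ)) (N : ℕ) (a b : Fin k → ℕ) : Prop :=
  ∃ l : List (Fin k → ℕ), l.head? = some a ∧ l.getLast? = some b ∧
    (∀ x ∈ l, x ∈ Z) ∧ l.Chain' (fun x y => fdist x y ≤ N)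

/-- The catenary degree of `n`: the least `N` such that any two factorizations
of `n` are connected by an `N`-chain. -/
noncomputable def catDegM {S : Type*} [AddCancelCommMonoid S] {k : ℕ}
    (gens : Fin k → S) (n : S) : ℕ :=
  sInf {N | ∀ a ∈ ZsetM gens n, ∀ b ∈ ZsetM gens n, IsNChain (ZsetM gens n) N a b}

/-- `n` is a Betti element: the graph on `Z(n)` joining factorizations with
nonzero componentwise gcd is disconnected. -/
def IsBettiM {S : Type*} [AddCancelCommMonoid S] {k : ℕ} (gens : Fin k → S)
    (n : S) : Prop :=
  ∃ a ∈ ZsetM gens n, ∃ b ∈ ZsetM gens n,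
    ¬ Relation.ReflTransGen
      (fun x y => x ∈ ZsetM gens n ∧ y ∈ ZsetM gens n ∧ ∃ i, min (x i) (y i) ≠ 0) a b

/-!
Induct on the length of `a`. If `n` is itself a Betti element, `catDegM gens n` is the bound:
were every factorization within distance `catDegM gens n - 1` of `a`, any two factorizations
would be joined by a two-step chain through `a`. Otherwise the gcd graph on `Z(n)` is connected,
so `a` has a neighbour `c ≠ a` sharing an atom with it; stripping the common part `gcd(a, c)`
leaves two distinct factorizations of a proper divisor of `n` with `a - gcd(a, c)` shorter than
`a`, and distances are unchanged by adding the common part back.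
-/

lemma fdist_comm {k : ℕ} (a b : Fin k → ℕ) : fdist a b = fdist b a :=
  max_comm _ _

lemma fdist_self {k : ℕ} (a : Fin k → ℕ) : fdist a a = 0 := by
  simp [fdist]

lemma fdist_add_right {k : ℕ} (a b g : Fin k → ℕ) : fdist (a + g) (b + g) = fdist a b := by
  simp only [fdist, Pi.add_apply, Nat.add_sub_add_right]

lemma flen_add {k : ℕ} (a b : Fin k → ℕ) : flen (a + b) = flen a + flen b :=
  Finset.sum_add_distrib

lemma flen_pos {k : ℕ} {g : Fin k → ℕ} (hg : g ≠ 0) : 0 < flen g := by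
  refine Nat.pos_of_ne_zero fun h => hg (funext fun i => ?_)
  exact (Finset.sum_eq_zero_iff.mp h) i (Finset.mem_univ i)

lemma exists_eq_add_add_of_min_ne_zero {k : ℕ} {a c : Fin k → ℕ}
    (h : ∃ i, min (a i) (c i) ≠ 0) : ∃ a₀ c₀ g : Fin k → ℕ, g ≠ 0 ∧ a = a₀ + g ∧ c = c₀ + g := by
  obtain ⟨i, hi⟩ := h
  refine ⟨a - a ⊓ c, c - a ⊓ c, a ⊓ c, fun h => hi (congrFun h i), ?_, ?_⟩ <;>
    simp only [tsub_add_cancel_of_le, inf_le_left, inf_le_right]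

lemma Relation.ReflTransGen.exists_ne_of_ne {α : Type*} {r : α → α → Prop} {a b : α}
    (h : Relation.ReflTransGen r a b) (hab : a ≠ b) : ∃ c, r a c ∧ c ≠ a := by
  induction h using Relation.ReflTransGen.head_induction_on with
  | refl => exact absurd rfl hab
  | @head x c hxc _ ih =>
    by_cases hcx : c = x
    · subst hcx; exact ih hab
    · exact ⟨c, hxc, hcx⟩

section Factorizations

variable {S : Type*} [AddCancelCommMonoid S] {k : ℕ} {gens : Fin k → S}

lemma add_mem_ZsetM_add_iff {a g : Fin k → ℕ} {m : S} :
    a + g ∈ ZsetM gens (m + ∑ i, g i • gens i) ↔ a ∈ ZsetM gens m := by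
  simp only [ZsetM, Set.mem_ofPred_eq, Pi.add_apply, add_nsmul, Finset.sum_add_distrib,
    add_left_inj]

lemma catDegM_le_of_forall_fdist_le {n : S} {a : Fin k → ℕ} {N : ℕ} (ha : a ∈ ZsetM gens n)
    (h : ∀ a' ∈ ZsetM gens n, fdist a a' ≤ N) : catDegM gens n ≤ N := by
  refine Nat.sInf_le fun x hx y hy => ⟨[x, a, y], rfl, rfl, ?_, ?_⟩
  · simp only [List.mem_cons, List.not_mem_nil, or_false]
    rintro z (rfl | rfl | rfl) <;> assumption
  · refine .cons_cons ?_ (.cons_cons (h y hy) (List.isChain_singleton _))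
    exact (fdist_comm x a).trans_le (h x hx)

lemma exists_catDegM_le_fdist {n : S} {a : Fin k → ℕ} (ha : a ∈ ZsetM gens n)
    (hZ : (ZsetM gens n).Nontrivial) :
    ∃ a' ∈ ZsetM gens n, a' ≠ a ∧ catDegM gens n ≤ fdist a a' := by
  by_contra! h
  obtain ⟨b, hb, hba⟩ := hZ.exists_ne a
  have hpos : 0 < catDegM gens n := (Nat.zero_le _).trans_lt (h b hb hba)
  have : catDegM gens n ≤ catDegM gens n - 1 := by
    refine catDegM_le_of_forall_fdist_le ha fun a' ha' => ?_
    by_cases ha'a : a' = a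
    · rw [ha'a, fdist_self]; exact Nat.zero_le _
    · exact Nat.le_sub_one_of_lt (h a' ha' ha'a)
  omega

lemma exists_min_ne_zero_of_not_isBettiM {n : S} {a : Fin k → ℕ} (hn : ¬ IsBettiM gens n)
    (ha : a ∈ ZsetM gens n) (hZ : (ZsetM gens n).Nontrivial) :
    ∃ c ∈ ZsetM gens n, c ≠ a ∧ ∃ i, min (a i) (c i) ≠ 0 := by
  unfold IsBettiM at hn
  push Not at hn
  obtain ⟨b, hb, hba⟩ := hZ.exists_ne a
  obtain ⟨c, ⟨-, hc, hac⟩, hca⟩ := (hn a ha b hb).exists_ne_of_ne hba.symm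
  exact ⟨c, hc, hca, hac⟩

theorem exists_isBettiM_catDegM_le_fdist {n : S} {a : Fin k → ℕ} (ha : a ∈ ZsetM gens n)
    (hZ : (ZsetM gens n).Nontrivial) :
    ∃ m : S, IsBettiM gens m ∧ (∃ t : S, n = m + t) ∧
      ∃ a' ∈ ZsetM gens n, a' ≠ a ∧ catDegM gens m ≤ fdist a a' := by
  induction hlen : flen a using Nat.strong_induction_on generalizing n a with
  | _ len ih =>
  by_cases hn : IsBettiM gens n
  · exact ⟨n, hn, ⟨0, (add_zero n).symm⟩, exists_catDegM_le_fdist ha hZ⟩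
  obtain ⟨c, hc, hca, hac⟩ := exists_min_ne_zero_of_not_isBettiM hn ha hZ
  obtain ⟨a₀, c₀, g, hg, rfl, rfl⟩ := exists_eq_add_add_of_min_ne_zero hac
  set m₀ := ∑ i, a₀ i • gens i
  have hn₀ : n = m₀ + ∑ i, g i • gens i :=
    ha.symm.trans ((add_mem_ZsetM_add_iff (m := m₀)).mpr rfl)
  subst hn₀
  have ha₀ : a₀ ∈ ZsetM gens m₀ := add_mem_ZsetM_add_iff.mp ha
  have hc₀ : c₀ ∈ ZsetM gens m₀ := add_mem_ZsetM_add_iff.mp hc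
  have hshorter : flen a₀ < len := by
    rw [← hlen, flen_add]; exact Nat.lt_add_of_pos_right (flen_pos hg)
  obtain ⟨m, hm, ⟨t, hm₀⟩, a', ha', ha'a, hle⟩ :=
    ih _ hshorter ha₀ ⟨a₀, ha₀, c₀, hc₀, fun h => hca (by rw [h])⟩ rfl
  refine ⟨m, hm, ⟨t + ∑ i, g i • gens i, by rw [hm₀, add_assoc]⟩, a' + g,
    add_mem_ZsetM_add_iff.mpr ha', fun h => ha'a (add_right_cancel h), ?_⟩
  rwa [fdist_add_right]

end Factorizations

theorem exists_far_factorization_general {S : Type*} [AddCancelCommMonoid S] {k : ℕ}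
    (gens : Fin k → S)
    (n : S) (hn : ∃ a ∈ ZsetM gens n, ∃ b ∈ ZsetM gens n, a ≠ b) :
    ∀ a ∈ ZsetM gens n, ∃ a' ∈ ZsetM gens n, a' ≠ a ∧
      sInf {c | ∃ m : S, IsBettiM gens m ∧ (∃ t : S, n = m + t) ∧ catDegM gens m = c}
        ≤ fdist a a' := by
  intro a ha
  obtain ⟨m, hm, hmn, a', ha', ha'a, hle⟩ := exists_isBettiM_catDegM_le_fdist ha hn
  refine ⟨a', ha', ha'a, le_trans (Nat.sInf_le ?_) hle⟩
  exact ⟨m, hm, hmn, rfl⟩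

/-- For every element n of a finitely generated reduced cancellative commutative
monoid with at least two factorizations, and every factorization a of n, there
is another factorization a' of n with d(a, a') ≥ b, where b is the minimum
catenary degree among Betti elements dividing n. -/
theorem exists_far_factorization {S : Type*} [AddCancelCommMonoid S] {k : ℕ}
    (gens : Fin k → S)
    (hred : ∀ a b : S, a + b = 0 → a = 0)
    (hgen : ∀ s : S, ∃ a : Fin k → ℕ, ∑ i, a i • gens i = s)
    (hatom : ∀ i, ∀ a : Fin k → ℕ, ∑ j, a j • gens j = gens i → a = Pi.single i 1)
    (n : S) (hn : ∃ a ∈ ZsetM gens n, ∃ b ∈ ZsetM gens n, a ≠ b) :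
    ∀ a ∈ ZsetM gens n, ∃ a' ∈ ZsetM gens n, a' ≠ a ∧
      sInf {c | ∃ m : S, IsBettiM gens m ∧ (∃ t : S, n = m + t) ∧ catDegM gens m = c}
        ≤ fdist a a' :=
  exists_far_factorization_general gens n hn
end

section
/- In the numerical monoid S = ⟨30, 52, 55⟩, the only Betti elements are 260 and 330, with Δ(260) = {2} and Δ(330) = {5}, while the delta set of S is Δ(S) = {1, 2, 3, 5}. In particular, the minimum of Δ(S) does not occur in the delta set of any Betti element. -/
/-- The set of factorizations of `n` over the generators `gens`. -/
def Zset {k : ℕ} (gens : Fin k → ℕ) (n : ℕ) : Set (Fin k → ℕ) :=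
  {a | ∑ i, a i * gens i = n}

/-- The catenary degree of `n`: the least `N` such that any two factorizations
of `n` are connected by an `N`-chain. -/
noncomputable def catDeg {k : ℕ} (gens : Fin k → ℕ) (n : ℕ) : ℕ :=
  sInf {N | ∀ a ∈ Zset gens n, ∀ b ∈ Zset gens n, IsNChain (Zset gens n) N a b}

/-- `n` is a Betti element: the graph on `Z(n)` joining factorizations with
nonzero componentwise gcd is disconnected. -/
def IsBetti {k : ℕ} (gens : Fin k → ℕ) (n : ℕ) : Prop :=
  ∃ a ∈ Zset gens n, ∃ b ∈ Zset gens n,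
    ¬ Relation.ReflTransGen
      (fun x y => x ∈ Zset gens n ∧ y ∈ Zset gens n ∧ ∃ i, min (x i) (y i) ≠ 0) a b

/-- The set of catenary degrees of elements of the monoid generated by `gens`. -/
def CatSet {k : ℕ} (gens : Fin k → ℕ) : Set ℕ :=
  {c | ∃ n, (Zset gens n).Nonempty ∧ catDeg gens n = c}

/-- The length set of . -/
def Lset {k : ℕ} (gens : Fin k → ℕ) (n : ℕ) : Set ℕ := flen '' Zset gens n

/-- The delta set of : the set of successive differences of the length set. -/
def DeltaSet {k : ℕ} (gens : Fin k → ℕ) (n : ℕ) : Set ℕ :=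
  {d | 0 < d ∧ ∃ l ∈ Lset gens n, l + d ∈ Lset gens n ∧
    ∀ m ∈ Lset gens n, l < m → ¬ m < l + d}

/-!
Two factorizations of `n` with disjoint supports can always be joined through a third one that
shares an atom with each, except for `n = 260 = 5·52 = 5·30 + 2·55` and
`n = 330 = 11·30 = 6·55`, whose only factorizations are the two displayed. Disjoint supports
force one of the two factorizations to be a multiple `x·gᵢ` of a single generator, and unless
`n` is `260` or `330` one of the relations `16·30 = 5·52 + 4·55`, `11·30 = 6·55`,
`5·52 = 5·30 + 2·55`, `50·52 = 83·30 + 2·55` rewrites part of one factorization into something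
that still meets the support of the other.

If `l` and `l + d` are consecutive lengths of `n` with `d = 4` or `d ≥ 6`, the exchanges
`5·52 → 5·30 + 2·55`, `8·55 → 6·30 + 5·52`, `6·55 → 11·30`, which lengthen a factorization by
`2`, `3`, `5`, do not apply to a factorization of length `l`; it then has fewer than five `52`s
and few `55`s, too few for a factorization longer by `d`. The gaps `1, 2, 3, 5` occur between
the lengths `10, 11` of `550`, `5, 7` of `260`, `8, 11` of `440` and `6, 11` of `330`.
-/

section General

variable {k : ℕ} {gens : Fin k → ℕ} {n : ℕ}

def ShareAtom (x y : Fin k → ℕ) : Prop := ∃ i, min (x i) (y i) ≠ 0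

theorem ShareAtom.symm {x y : Fin k → ℕ} (h : ShareAtom x y) : ShareAtom y x :=
  let ⟨i, hi⟩ := h
  ⟨i, by rwa [min_comm]⟩

def Bridged (Z : Set (Fin k → ℕ)) (a b : Fin k → ℕ) : Prop :=
  ∃ c ∈ Z, ShareAtom a c ∧ ShareAtom c b

theorem Bridged.symm {Z : Set (Fin k → ℕ)} {a b : Fin k → ℕ} (h : Bridged Z a b) :
    Bridged Z b a :=
  let ⟨c, hc, hac, hcb⟩ := h
  ⟨c, hc, hcb.symm, hac.symm⟩

theorem zset_zero (hgens : ∀ i, gens i ≠ 0) : Zset gens 0 = {0} := by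
  ext a
  simp [Zset, Finset.sum_eq_zero_iff, hgens, funext_iff]

theorem not_isBetti_of_bridged
    (h : ∀ a ∈ Zset gens n, ∀ b ∈ Zset gens n, a ≠ b → ¬ ShareAtom a b →
      Bridged (Zset gens n) a b) :
    ¬ IsBetti gens n := by
  rintro ⟨a, ha, b, hb, hab⟩
  apply hab
  by_cases heq : a = b
  · exact heq ▸ .refl
  by_cases hshare : ShareAtom a b
  · exact .single ⟨ha, hb, hshare⟩
  obtain ⟨c, hc, hac, hcb⟩ := h a ha b hb heq hshare
  exact .head ⟨ha, hc, hac⟩ (.single ⟨hc, hb, hcb⟩)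

theorem isBetti_of_zset_eq_pair {a b : Fin k → ℕ} (hZ : Zset gens n = {a, b}) (hab : a ≠ b)
    (hdisj : ¬ ShareAtom a b) : IsBetti gens n := by
  refine ⟨a, by simp [hZ], b, by simp [hZ], fun hpath => hab ?_⟩
  suffices ∀ y, Relation.ReflTransGen
      (fun x y => x ∈ Zset gens n ∧ y ∈ Zset gens n ∧ ShareAtom x y) a y → y = a from
    (this b hpath).symm
  intro y hy
  induction hy with
  | refl => rfl
  | tail _ hstep ih =>
    obtain ⟨-, hy, hshare⟩ := hstep
    subst ih
    rw [hZ] at hy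
    rcases hy with rfl | rfl
    · rfl
    · exact absurd hshare hdisj

theorem sub_mem_deltaSet {l m : ℕ} (hl : l ∈ Lset gens n) (hm : m ∈ Lset gens n) (hlm : l < m)
    (hgap : ∀ j ∈ Lset gens n, l < j → m ≤ j) : m - l ∈ DeltaSet gens n :=
  ⟨by omega, l, hl, by rwa [Nat.add_sub_cancel' hlm.le],
    fun j hj hlj hjm => by have := hgap j hj hlj; omega⟩

theorem deltaSet_eq_singleton {l m : ℕ} (hlm : l < m) (hL : Lset gens n = {l, m}) :
    DeltaSet gens n = {m - l} := by
  ext d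
  refine ⟨fun ⟨hd, l', hl', hld, _⟩ => ?_, ?_⟩
  · rw [hL] at hl' hld
    simp only [Set.mem_insert_iff, Set.mem_singleton_iff] at hl' hld ⊢
    omega
  · rintro rfl
    refine sub_mem_deltaSet (by simp [hL]) (by simp [hL]) hlm fun j hj hlj => ?_
    rw [hL] at hj
    rcases hj with rfl | rfl <;> omega

theorem vec3_eq_iff {α : Type*} {x : Fin 3 → α} {p q r : α} :
    x = ![p, q, r] ↔ x 0 = p ∧ x 1 = q ∧ x 2 = r := by
  simp [funext_iff, Fin.forall_fin_succ]

end General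

section ThirtyFiftyTwoFiftyFive

variable {n : ℕ}

theorem mem_zset_iff {x : Fin 3 → ℕ} :
    x ∈ Zset ![30, 52, 55] n ↔ 30 * x 0 + 52 * x 1 + 55 * x 2 = n := by
  simp [Zset, Fin.sum_univ_three, mul_comm]

theorem mem_lset_iff {l : ℕ} :
    l ∈ Lset ![30, 52, 55] n ↔ ∃ p q r, 30 * p + 52 * q + 55 * r = n ∧ p + q + r = l := by
  constructor
  · rintro ⟨x, hx, rfl⟩
    exact ⟨x 0, x 1, x 2, mem_zset_iff.1 hx, by simp [flen, Fin.sum_univ_three]⟩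
  · rintro ⟨p, q, r, hn, rfl⟩
    exact ⟨![p, q, r], mem_zset_iff.2 (by simpa using hn), by simp [flen, Fin.sum_univ_three]⟩

theorem zset_260 : Zset ![30, 52, 55] 260 = {![0, 5, 0], ![5, 0, 2]} := by
  ext x
  simp only [mem_zset_iff, Set.mem_insert_iff, Set.mem_singleton_iff, vec3_eq_iff]
  refine ⟨fun h => ?_, by omega⟩
  have : x 1 ≤ 5 := by omega
  interval_cases x 1 <;> omega

theorem zset_330 : Zset ![30, 52, 55] 330 = {![11, 0, 0], ![0, 0, 6]} := by
  ext x
  simp only [mem_zset_iff, Set.mem_insert_iff, Set.mem_singleton_iff, vec3_eq_iff]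
  refine ⟨fun h => ?_, by omega⟩
  have : x 1 ≤ 6 := by omega
  interval_cases x 1 <;> omega

theorem lset_440 : Lset ![30, 52, 55] 440 = {8, 11, 13} := by
  ext l
  simp only [mem_lset_iff, Set.mem_insert_iff, Set.mem_singleton_iff]
  refine ⟨fun ⟨p, q, r, h, hl⟩ => ?_, ?_⟩
  · have : q ≤ 8 := by omega
    interval_cases q <;> omega
  · rintro (rfl | rfl | rfl)
    exacts [⟨0, 0, 8, rfl, rfl⟩, ⟨6, 5, 0, rfl, rfl⟩, ⟨11, 0, 2, rfl, rfl⟩]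

theorem isBetti_260 : IsBetti ![30, 52, 55] 260 :=
  isBetti_of_zset_eq_pair zset_260 (by simp) (by simp [ShareAtom, Fin.exists_fin_succ])

theorem isBetti_330 : IsBetti ![30, 52, 55] 330 :=
  isBetti_of_zset_eq_pair zset_330 (by simp) (by simp [ShareAtom, Fin.exists_fin_succ])

theorem eleven_le_of_thirty_mul_eq {x y z : ℕ} (h : 30 * x = 52 * y + 55 * z) (hz : z ≠ 0) :
    11 ≤ x := by
  by_contra! hx
  interval_cases x <;> omega

theorem six_le_of_fiftyFive_mul_eq {x y z : ℕ} (h : 55 * x = 30 * y + 52 * z) (hy : y ≠ 0) :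
    6 ≤ x := by
  by_contra! hx
  interval_cases x <;> omega

theorem bridged_of_pure₀ (h330 : n ≠ 330) {a b : Fin 3 → ℕ} (ha0 : a 0 ≠ 0)
    (ha : 30 * a 0 = n) (hb : 52 * b 1 + 55 * b 2 = n) : Bridged (Zset ![30, 52, 55] n) a b := by
  rcases Nat.eq_zero_or_pos (b 2) with hb2 | hb2
  · -- `16·30 = 5·52 + 4·55`
    obtain ⟨ha26, hb15⟩ : 26 ≤ a 0 ∧ 15 ≤ b 1 := by omega
    obtain ⟨x, hx⟩ := Nat.exists_eq_add_of_le ha26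
    refine ⟨![x + 10, 5, 4], ?_, ⟨0, ?_⟩, ⟨1, ?_⟩⟩ <;> simp [mem_zset_iff] <;> omega
  · -- `11·30 = 6·55`
    have h11 := eleven_le_of_thirty_mul_eq (ha.trans hb.symm) hb2.ne'
    obtain ⟨x, hx⟩ := Nat.exists_eq_add_of_le (show 12 ≤ a 0 by omega)
    refine ⟨![x + 1, 0, 6], ?_, ⟨0, ?_⟩, ⟨2, ?_⟩⟩ <;> simp [mem_zset_iff] <;> omega

theorem bridged_of_pure₁ (h260 : n ≠ 260) {a b : Fin 3 → ℕ} (ha1 : a 1 ≠ 0)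
    (ha : 52 * a 1 = n) (hb : 30 * b 0 + 55 * b 2 = n) : Bridged (Zset ![30, 52, 55] n) a b := by
  -- `5·52 = 5·30 + 2·55`
  obtain ⟨x, hx⟩ := Nat.exists_eq_add_of_le (show 6 ≤ a 1 by omega)
  have hc : ![5, x + 1, 2] ∈ Zset ![30, 52, 55] n := by simp [mem_zset_iff]; omega
  rcases Nat.eq_zero_or_pos (b 0) with hb0 | hb0
  · exact ⟨_, hc, ⟨1, by simp; omega⟩, ⟨2, by simp; omega⟩⟩
  · exact ⟨_, hc, ⟨1, by simp; omega⟩, ⟨0, by simp; omega⟩⟩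

theorem bridged_of_pure₂ (h330 : n ≠ 330) {a b : Fin 3 → ℕ} (ha2 : a 2 ≠ 0)
    (ha : 55 * a 2 = n) (hb : 30 * b 0 + 52 * b 1 = n) : Bridged (Zset ![30, 52, 55] n) a b := by
  rcases Nat.eq_zero_or_pos (b 0) with hb0 | hb0
  · -- `50·52 = 83·30 + 2·55`
    obtain ⟨ha52, hb55⟩ : 52 ≤ a 2 ∧ 55 ≤ b 1 := by omega
    obtain ⟨y, hy⟩ := Nat.exists_eq_add_of_le hb55
    refine ⟨![83, y + 5, 2], ?_, ⟨2, ?_⟩, ⟨1, ?_⟩⟩ <;> simp [mem_zset_iff] <;> omega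
  · -- `6·55 = 11·30`
    have h6 := six_le_of_fiftyFive_mul_eq (ha.trans hb.symm) hb0.ne'
    obtain ⟨x, hx⟩ := Nat.exists_eq_add_of_le (show 7 ≤ a 2 by omega)
    refine ⟨![11, 0, x + 1], ?_, ⟨2, ?_⟩, ⟨0, ?_⟩⟩ <;> simp [mem_zset_iff] <;> omega

theorem bridged_of_not_shareAtom (h260 : n ≠ 260) (h330 : n ≠ 330) {a b : Fin 3 → ℕ}
    (ha : a ∈ Zset ![30, 52, 55] n) (hb : b ∈ Zset ![30, 52, 55] n) (hab : a ≠ b)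
    (hdisj : ¬ ShareAtom a b) : Bridged (Zset ![30, 52, 55] n) a b := by
  have hn0 : n ≠ 0 := by
    rintro rfl
    rw [zset_zero (by decide)] at ha hb
    exact hab (ha.trans hb.symm)
  have hsupp : ∀ i, a i = 0 ∨ b i = 0 := by
    simpa [ShareAtom, or_iff_not_imp_left] using hdisj
  replace ha := mem_zset_iff.1 ha
  replace hb := mem_zset_iff.1 hb
  rcases hsupp 0 with h0 | h0 <;> rcases hsupp 1 with h1 | h1 <;> rcases hsupp 2 with h2 | h2
  · omega
  · exact bridged_of_pure₂ h330 (by omega) (by omega) (by omega)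
  · exact bridged_of_pure₁ h260 (by omega) (by omega) (by omega)
  · exact (bridged_of_pure₀ h330 (by omega) (by omega) (by omega)).symm
  · exact bridged_of_pure₀ h330 (by omega) (by omega) (by omega)
  · exact (bridged_of_pure₁ h260 (by omega) (by omega) (by omega)).symm
  · exact (bridged_of_pure₂ h330 (by omega) (by omega) (by omega)).symm
  · omega

theorem isBetti_iff : IsBetti ![30, 52, 55] n ↔ n = 260 ∨ n = 330 := by
  refine ⟨fun h => ?_, by rintro (rfl | rfl); exacts [isBetti_260, isBetti_330]⟩
  by_contra! hn
  exact not_isBetti_of_bridged (fun a ha b hb => bridged_of_not_shareAtom hn.1 hn.2 ha hb) h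

theorem length_ne_add_four {p q r p' q' r' : ℕ} (hq : q < 5) (hr : r < 8)
    (h : 30 * p + 52 * q + 55 * r = 30 * p' + 52 * q' + 55 * r') :
    p' + q' + r' ≠ p + q + r + 4 := by
  intro hl
  have : 22 * q + 25 * r = 120 + 22 * q' + 25 * r' := by omega
  interval_cases q <;> omega

theorem length_lt_add_six {p q r p' q' r' : ℕ} (hq : q < 5) (hr : r < 6)
    (h : 30 * p + 52 * q + 55 * r = 30 * p' + 52 * q' + 55 * r') :
    p' + q' + r' < p + q + r + 6 := by
  by_contra! hl
  obtain ⟨e, he⟩ := Nat.exists_eq_add_of_le hl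
  have : 22 * q + 25 * r = 180 + 30 * e + 22 * q' + 25 * r' := by omega
  interval_cases q <;> omega

theorem eq_of_mem_deltaSet {d : ℕ} (hd : d ∈ DeltaSet ![30, 52, 55] n) :
    d = 1 ∨ d = 2 ∨ d = 3 ∨ d = 5 := by
  obtain ⟨hd0, l, hl, hld, hgap⟩ := hd
  obtain ⟨p, q, r, hn, rfl⟩ := mem_lset_iff.1 hl
  have hshort : ∀ t < d, 0 < t → p + q + r + t ∉ Lset ![30, 52, 55] n :=
    fun t htd ht h => hgap _ h (by omega) (by omega)
  by_contra! hd'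
  -- `5·52 = 5·30 + 2·55` lengthens by `2`
  have hq : q < 5 := by
    by_contra! hq
    obtain ⟨q, rfl⟩ := Nat.exists_eq_add_of_le hq
    exact hshort 2 (by omega) (by norm_num)
      (mem_lset_iff.2 ⟨p + 5, q, r + 2, by rw [← hn]; ring, by ring⟩)
  rcases (show d = 4 ∨ 6 ≤ d by omega) with rfl | hd6
  · -- `8·55 = 6·30 + 5·52` lengthens by `3`
    have hr : r < 8 := by
      by_contra! hr
      obtain ⟨r, rfl⟩ := Nat.exists_eq_add_of_le hr
      exact hshort 3 (by omega) (by norm_num)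
        (mem_lset_iff.2 ⟨p + 6, q + 5, r, by rw [← hn]; ring, by ring⟩)
    obtain ⟨p', q', r', hn', hl'⟩ := mem_lset_iff.1 hld
    exact length_ne_add_four hq hr (hn.trans hn'.symm) hl'
  · -- `6·55 = 11·30` lengthens by `5`
    have hr : r < 6 := by
      by_contra! hr
      obtain ⟨r, rfl⟩ := Nat.exists_eq_add_of_le hr
      exact hshort 5 (by omega) (by norm_num)
        (mem_lset_iff.2 ⟨p + 11, q, r, by rw [← hn]; ring, by ring⟩)
    obtain ⟨p', q', r', hn', hl'⟩ := mem_lset_iff.1 hld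
    have := length_lt_add_six hq hr (hn.trans hn'.symm)
    omega

theorem deltaSet_260 : DeltaSet ![30, 52, 55] 260 = {2} :=
  deltaSet_eq_singleton (l := 5) (m := 7) (by norm_num) <| by
    simp [Lset, zset_260, Set.image_pair, flen, Fin.sum_univ_three]

theorem deltaSet_330 : DeltaSet ![30, 52, 55] 330 = {5} :=
  deltaSet_eq_singleton (l := 6) (m := 11) (by norm_num) <| by
    simp [Lset, zset_330, Set.image_pair, flen, Fin.sum_univ_three, Set.pair_comm]

theorem iUnion_deltaSet : ⋃ n, DeltaSet ![30, 52, 55] n = {1, 2, 3, 5} := by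
  ext d
  simp only [Set.mem_iUnion, Set.mem_insert_iff, Set.mem_singleton_iff]
  refine ⟨fun ⟨n, hd⟩ => eq_of_mem_deltaSet hd, ?_⟩
  rintro (rfl | rfl | rfl | rfl)
  · exact ⟨550, sub_mem_deltaSet (l := 10) (m := 11) (mem_lset_iff.2 ⟨0, 0, 10, rfl, rfl⟩)
      (mem_lset_iff.2 ⟨1, 10, 0, rfl, rfl⟩) (by norm_num) fun j _ hj => hj⟩
  · exact ⟨260, by simp [deltaSet_260]⟩
  · exact ⟨440, sub_mem_deltaSet (l := 8) (m := 11) (by simp [lset_440]) (by simp [lset_440])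
      (by norm_num) (by simp [lset_440])⟩
  · exact ⟨330, by simp [deltaSet_330]⟩

end ThirtyFiftyTwoFiftyFive

/-- In S = ⟨30,52,55⟩: the Betti elements are exactly 260 and 330, with
Δ(260) = {2}, Δ(330) = {5}, Δ(S) = {1,2,3,5}; in particular min Δ(S) does not
occur in the delta set of any Betti element. -/
theorem deltaSet_30_52_55 :
    {n | IsBetti ![30, 52, 55] n} = {260, 330} ∧
    DeltaSet ![30, 52, 55] 260 = {2} ∧
    DeltaSet ![30, 52, 55] 330 = {5} ∧
    (⋃ n, DeltaSet ![30, 52, 55] n) = {1, 2, 3, 5} ∧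
    ∀ m, IsBetti ![30, 52, 55] m →
      sInf (⋃ n, DeltaSet ![30, 52, 55] n) ∉ DeltaSet ![30, 52, 55] m := by
  have hmin : sInf (⋃ n, DeltaSet ![30, 52, 55] n) = 1 := by
    rw [iUnion_deltaSet]
    exact IsLeast.csInf_eq ⟨by simp, by simp [lowerBounds]⟩
  refine ⟨Set.ext fun n => isBetti_iff, deltaSet_260, deltaSet_330, iUnion_deltaSet,
    fun m hm => ?_⟩
  rcases isBetti_iff.1 hm with rfl | rfl <;> simp [hmin, deltaSet_260, deltaSet_330]
end

section
/- Let S = ⟨n_1, n_2⟩ be a numerical monoid generated by coprime n_1, n_2 > 1, and let n ∈ ℤ. Then n ∈ S if and only if n_1 n_2 - n_1 - n_2 - n ∉ S. -/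
/-!
If `n = a n₁ + b n₂` and `n₁ n₂ - n₁ - n₂ - n = c n₁ + d n₂`, then
`n₁ n₂ = (a + c + 1) n₁ + (b + d + 1) n₂`, and coprimality forces `n₂ ∣ a + c + 1` and
`n₁ ∣ b + d + 1`, making the right side at least `2 n₁ n₂`. Conversely, Bézout writes any `n`
as `a n₁ + t n₂` with `0 ≤ a < n₂`: if `t ≥ 0` then `n` is in the monoid, and otherwise
`n₁ n₂ - n₁ - n₂ - n = (n₂ - 1 - a) n₁ + (-t - 1) n₂` is.
-/

namespace Nat.Coprime

variable {n₁ n₂ : ℕ}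

theorem add_one_mul_add_add_one_mul_ne_mul (hcop : n₁.Coprime n₂) (a b : ℕ) :
    (a + 1) * n₁ + (b + 1) * n₂ ≠ n₁ * n₂ := by
  intro h
  have hdvd₂ : n₂ ∣ a + 1 := by
    have : n₂ ∣ (a + 1) * n₁ + (b + 1) * n₂ := h ▸ _root_.dvd_mul_left n₂ n₁
    exact hcop.symm.dvd_of_dvd_mul_right ((Nat.dvd_add_left (_root_.dvd_mul_left _ _)).mp this)
  have hdvd₁ : n₁ ∣ b + 1 := by
    have : n₁ ∣ (a + 1) * n₁ + (b + 1) * n₂ := h ▸ _root_.dvd_mul_right n₁ n₂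
    exact hcop.dvd_of_dvd_mul_right ((Nat.dvd_add_right (_root_.dvd_mul_left _ _)).mp this)
  have hle₂ := Nat.le_of_dvd a.succ_pos hdvd₂
  have hle₁ := Nat.le_of_dvd b.succ_pos hdvd₁
  have hzero : n₁ = 0 ∧ n₂ = 0 := by constructor <;> nlinarith
  simp [hzero.1, hzero.2] at hcop

theorem exists_lt_eq_mul_add_mul (hcop : n₁.Coprime n₂) (hn₂ : 0 < n₂) (n : ℤ) :
    ∃ a : ℕ, a < n₂ ∧ ∃ t : ℤ, n = a * n₁ + t * n₂ := by
  have hbezout : (1 : ℤ) = n₁ * n₁.gcdA n₂ + n₂ * n₁.gcdB n₂ := by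
    rw [← Nat.gcd_eq_gcd_ab, hcop.gcd_eq_one, Nat.cast_one]
  set u := n * n₁.gcdA n₂
  have hu : 0 ≤ u % n₂ := Int.emod_nonneg u (by omega)
  have hu' : u % n₂ < n₂ := Int.emod_lt_of_pos u (by omega)
  refine ⟨(u % n₂).toNat, by omega, n * n₁.gcdB n₂ + u / n₂ * n₁, ?_⟩
  rw [Int.toNat_of_nonneg hu]
  linear_combination n * hbezout - n₁ * Int.emod_add_mul_ediv u n₂

end Nat.Coprime

theorem mem_iff_frobenius_not_mem_general (n₁ n₂ : ℕ) (h₂ : 1 < n₂)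
    (hcop : Nat.Coprime n₁ n₂) (n : ℤ) :
    (∃ a b : ℕ, n = a * n₁ + b * n₂) ↔
      ¬ ∃ a b : ℕ, (n₁ * n₂ - n₁ - n₂ - n : ℤ) = a * n₁ + b * n₂ := by
  constructor
  · rintro ⟨a, b, rfl⟩ ⟨c, d, hcd⟩
    refine hcop.add_one_mul_add_add_one_mul_ne_mul (a + c) (b + d) ?_
    zify
    linear_combination -hcd
  · intro hnot
    obtain ⟨a, ha, t, rfl⟩ := hcop.exists_lt_eq_mul_add_mul (by omega) n
    rcases le_or_gt 0 t with ht | ht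
    · exact ⟨a, t.toNat, by rw [Int.toNat_of_nonneg ht]⟩
    · refine absurd ⟨n₂ - 1 - a, (-t - 1).toNat, ?_⟩ hnot
      rw [Int.toNat_of_nonneg (by omega)]
      push_cast [show a ≤ n₂ - 1 by omega, show 1 ≤ n₂ by omega]
      ring

/-- For a numerical monoid S = ⟨n₁, n₂⟩ with coprime n₁, n₂ > 1 and any integer
n: n ∈ S if and only if n₁n₂ - n₁ - n₂ - n ∉ S. -/
theorem mem_iff_frobenius_not_mem (n₁ n₂ : ℕ) (h₁ : 1 < n₁) (h₂ : 1 < n₂)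
    (hcop : Nat.Coprime n₁ n₂) (n : ℤ) :
    (∃ a b : ℕ, n = a * n₁ + b * n₂) ↔
      ¬ ∃ a b : ℕ, (n₁ * n₂ - n₁ - n₂ - n : ℤ) = a * n₁ + b * n₂ :=
  mem_iff_frobenius_not_mem_general n₁ n₂ h₂ hcop n
end

section
/- Let S = ⟨n_1, n_2, n_3⟩ be a numerical monoid minimally generated by n_1, n_2, n_3. Every Betti element of S can be written in the form c_i n_i where, for some permutation {i,j,k} = {1,2,3}, c_i = min{c > 0 : c n_i ∈ ⟨n_j, n_k⟩}. -/
/-!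
If `a` and `b` lie in different components of the graph of `IsBetti`, every factorization connected
to `a` has support disjoint from every factorization connected to `b`. With three generators two
disjoint supports cannot both have two elements, so one component, say that of `a`, consists of
factorizations supported on a single generator: `a = c eᵢ`, and `b` shows `c nᵢ ∈ ⟨nⱼ, nₖ⟩`.
If also `c' nᵢ = x nⱼ + y nₖ` with `0 < c' < c`, trading `c' nᵢ` for `x nⱼ + y nₖ` in `a` gives a
neighbour of `a` with two nonzero coordinates, so `c` is the least such coefficient.
-/

open Finset Relation

section Factorizations

variable {k : ℕ} (gens : Fin k → ℕ) (m : ℕ)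

def FactorizationAdj (x y : Fin k → ℕ) : Prop :=
  x ∈ Zset gens m ∧ y ∈ Zset gens m ∧ ∃ i, min (x i) (y i) ≠ 0

instance : Std.Symm (FactorizationAdj gens m) where
  symm _ _ := fun ⟨hx, hy, i, hi⟩ => ⟨hy, hx, i, by rwa [min_comm]⟩

def fsupp (x : Fin k → ℕ) : Finset (Fin k) := {i | x i ≠ 0}

variable {gens m}

theorem fsupp_nonempty {x : Fin k → ℕ} (hx : x ∈ Zset gens m) (hm : m ≠ 0) :
    (fsupp x).Nonempty := by
  by_contra h
  simp only [fsupp, not_nonempty_iff_eq_empty, filter_eq_empty_iff, mem_univ, true_implies,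
    not_not] at h
  exact hm (hx.symm.trans (by simp [h]))

theorem eq_zero_of_mem_zset_zero (hpos : ∀ i, 0 < gens i) {x : Fin k → ℕ}
    (hx : x ∈ Zset gens 0) : x = 0 := by
  funext i
  simpa [(hpos i).ne'] using sum_eq_zero_iff.mp hx i (mem_univ i)

theorem ne_zero_of_isBetti (hpos : ∀ i, 0 < gens i) (h : IsBetti gens m) : m ≠ 0 := by
  rintro rfl
  obtain ⟨a, ha, b, hb, hab⟩ := h
  rw [eq_zero_of_mem_zset_zero hpos ha, eq_zero_of_mem_zset_zero hpos hb] at hab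
  exact hab ReflTransGen.refl

theorem card_fsupp_add_card_fsupp_le {x y : Fin k → ℕ} (h : ∀ i, x i = 0 ∨ y i = 0) :
    #(fsupp x) + #(fsupp y) ≤ k := by
  have hdisj : Disjoint (fsupp x) (fsupp y) := by
    rw [disjoint_left]
    intro i hx hy
    simp only [fsupp, mem_filter, mem_univ, true_and] at hx hy
    exact (h i).elim hx hy
  simpa [← card_union_of_disjoint hdisj] using card_le_univ (fsupp x ∪ fsupp y)

theorem disjoint_of_not_reflTransGen {a b u v : Fin k → ℕ}
    (hab : ¬ ReflTransGen (FactorizationAdj gens m) a b)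
    (hau : ReflTransGen (FactorizationAdj gens m) a u)
    (hbv : ReflTransGen (FactorizationAdj gens m) b v)
    (hu : u ∈ Zset gens m) (hv : v ∈ Zset gens m) (i : Fin k) : u i = 0 ∨ v i = 0 := by
  by_contra! h
  exact hab ((hau.tail ⟨hu, hv, i, by omega⟩).trans (Std.Symm.symm _ _ hbv))

theorem narrow_component_of_not_reflTransGen (hk : k ≤ 3) {a b : Fin k → ℕ}
    (hab : ¬ ReflTransGen (FactorizationAdj gens m) a b) :
    (∀ u ∈ Zset gens m, ReflTransGen (FactorizationAdj gens m) a u → #(fsupp u) ≤ 1) ∨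
      (∀ v ∈ Zset gens m, ReflTransGen (FactorizationAdj gens m) b v → #(fsupp v) ≤ 1) := by
  by_contra! ⟨⟨u, hu, hau, hu2⟩, ⟨v, hv, hbv, hv2⟩⟩
  have := card_fsupp_add_card_fsupp_le (disjoint_of_not_reflTransGen hab hau hbv hu hv)
  omega

end Factorizations

theorem Fin.sum_univ_three_rotate {M : Type*} [AddCommMonoid M] (f : Fin 3 → M) (i : Fin 3) :
    ∑ t, f t = f i + f (i + 1) + f (i + 2) := by
  rw [← Equiv.sum_comp (Equiv.addLeft i)]
  simp [Fin.sum_univ_three]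

section ThreeGenerators

variable {n : Fin 3 → ℕ} {m : ℕ}

def rotVec (i : Fin 3) (u v w : ℕ) : Fin 3 → ℕ := fun t => ![u, v, w] (t - i)

@[simp] theorem rotVec_self (i : Fin 3) (u v w : ℕ) : rotVec i u v w i = u := by
  simp [rotVec]

@[simp] theorem rotVec_add_one (i : Fin 3) (u v w : ℕ) : rotVec i u v w (i + 1) = v := by
  simp [rotVec]

@[simp] theorem rotVec_add_two (i : Fin 3) (u v w : ℕ) : rotVec i u v w (i + 2) = w := by
  simp [rotVec]

theorem mem_zset_iff_rotate {x : Fin 3 → ℕ} (i : Fin 3) :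
    x ∈ Zset n m ↔ x i * n i + x (i + 1) * n (i + 1) + x (i + 2) * n (i + 2) = m := by
  rw [← Fin.sum_univ_three_rotate (fun t => x t * n t) i]
  rfl

theorem rotVec_mem_zset {i : Fin 3} {u v w : ℕ} :
    rotVec i u v w ∈ Zset n m ↔ u * n i + v * n (i + 1) + w * n (i + 2) = m := by
  simp [mem_zset_iff_rotate i]

theorem two_le_card_fsupp_rotVec {i : Fin 3} {u v w : ℕ} (hu : u ≠ 0) (hvw : v ≠ 0 ∨ w ≠ 0) :
    2 ≤ #(fsupp (rotVec i u v w)) := by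
  refine one_lt_card.mpr ⟨i, by simpa [fsupp] using hu, ?_⟩
  rcases hvw with hv | hw
  · exact ⟨i + 1, by simpa [fsupp] using hv, by fin_cases i <;> decide⟩
  · exact ⟨i + 2, by simpa [fsupp] using hw, by fin_cases i <;> decide⟩

theorem eq_rotVec_of_fsupp_eq_singleton {x : Fin 3 → ℕ} {i : Fin 3} (hx : fsupp x = {i}) :
    x = rotVec i (x i) 0 0 := by
  have hzero : ∀ t, t ≠ i → x t = 0 := fun t ht => by
    simpa [fsupp, ht] using congrArg (t ∈ ·) hx
  funext t
  obtain rfl | rfl | rfl : t = i ∨ t = i + 1 ∨ t = i + 2 := by fin_cases i <;> fin_cases t <;> decide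
  · simp
  · simpa using hzero _ (by fin_cases i <;> decide)
  · simpa using hzero _ (by fin_cases i <;> decide)

theorem factorizationAdj_rotVec (hpos : ∀ i, 0 < n i) {i : Fin 3} {c c' x y : ℕ}
    (hc' : 0 < c') (hlt : c' < c) (hrel : c' * n i = x * n (i + 1) + y * n (i + 2)) :
    FactorizationAdj n (c * n i) (rotVec i c 0 0) (rotVec i (c - c') x y) ∧
      2 ≤ #(fsupp (rotVec i (c - c') x y)) := by
  have hxy : x ≠ 0 ∨ y ≠ 0 := by
    by_contra! h
    simp only [h, zero_mul, add_zero, mul_eq_zero] at hrel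
    exact hrel.elim hc'.ne' (hpos i).ne'
  refine ⟨⟨rotVec_mem_zset.mpr (by simp), rotVec_mem_zset.mpr ?_, i, by simp; omega⟩,
    two_le_card_fsupp_rotVec (by omega) hxy⟩
  calc (c - c') * n i + x * n (i + 1) + y * n (i + 2) = (c - c') * n i + c' * n i := by
        rw [hrel, add_assoc]
    _ = c * n i := by rw [← add_mul, Nat.sub_add_cancel hlt.le]

theorem exists_isLeast_of_narrow_component (hpos : ∀ i, 0 < n i) (hm : m ≠ 0)
    {a b : Fin 3 → ℕ} (ha : a ∈ Zset n m) (hb : b ∈ Zset n m)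
    (hab : ¬ ReflTransGen (FactorizationAdj n m) a b)
    (hnarrow : ∀ u ∈ Zset n m, ReflTransGen (FactorizationAdj n m) a u → #(fsupp u) ≤ 1) :
    ∃ i c, m = c * n i ∧
      IsLeast {c | 0 < c ∧ ∃ x y : ℕ, c * n i = x * n (i + 1) + y * n (i + 2)} c := by
  obtain ⟨i, hi⟩ := card_eq_one.mp
    (le_antisymm (hnarrow a ha .refl) (fsupp_nonempty ha hm).card_pos)
  have ha_eq := eq_rotVec_of_fsupp_eq_singleton hi
  have hmc : m = a i * n i := by
    rw [ha_eq, rotVec_mem_zset] at ha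
    simpa using ha.symm
  have hai : a i ≠ 0 := by simpa [fsupp] using congrArg (i ∈ ·) hi
  have hbi : b i = 0 := (disjoint_of_not_reflTransGen hab .refl .refl ha hb i).resolve_left hai
  refine ⟨i, a i, hmc, ⟨Nat.pos_of_ne_zero hai, b (i + 1), b (i + 2), ?_⟩, ?_⟩
  · rw [mem_zset_iff_rotate i, hbi, zero_mul, zero_add] at hb
    rw [← hmc, hb]
  · rintro c' ⟨hc', x, y, hrel⟩
    by_contra! hlt
    obtain ⟨hadj, hwide⟩ := factorizationAdj_rotVec hpos hc' hlt hrel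
    rw [← ha_eq, ← hmc] at hadj
    have := hnarrow _ hadj.2.1 (.single hadj)
    omega

end ThreeGenerators

theorem betti_of_three_generated_general (n : Fin 3 → ℕ) (hge : ∀ i, 1 < n i) :
    ∀ m, IsBetti n m → ∃ (i : Fin 3) (c : ℕ), m = c * n i ∧ 0 < c ∧
      (∃ x y : ℕ, c * n i = x * n (i + 1) + y * n (i + 2)) ∧
      ∀ c', 0 < c' → (∃ x y : ℕ, c' * n i = x * n (i + 1) + y * n (i + 2)) → c ≤ c' := by
  intro m hB
  have hpos : ∀ i, 0 < n i := fun i => Nat.zero_lt_of_lt (hge i)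
  have hm := ne_zero_of_isBetti hpos hB
  obtain ⟨a, ha, b, hb, hab : ¬ ReflTransGen (FactorizationAdj n m) a b⟩ := hB
  obtain ⟨i, c, hmc, ⟨hc, hrep⟩, hleast⟩ :=
    (narrow_component_of_not_reflTransGen le_rfl hab).elim
      (exists_isLeast_of_narrow_component hpos hm ha hb hab)
      (exists_isLeast_of_narrow_component hpos hm hb ha fun hba => hab (Std.Symm.symm _ _ hba))
  exact ⟨i, c, hmc, hc, hrep, fun c' hc' hrep' => hleast ⟨hc', hrep'⟩⟩

/-- In a numerical monoid minimally generated by n₁, n₂, n₃, every Betti element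
has the form cᵢnᵢ with cᵢ = min{c > 0 : cnᵢ ∈ ⟨nⱼ, n_k⟩}. -/
theorem betti_of_three_generated (n : Fin 3 → ℕ) (hge : ∀ i, 1 < n i)
    (hgcd : Nat.gcd (n 0) (Nat.gcd (n 1) (n 2)) = 1)
    (hmin : ∀ i, ¬ ∃ a b : ℕ, a * n (i + 1) + b * n (i + 2) = n i) :
    ∀ m, IsBetti n m → ∃ (i : Fin 3) (c : ℕ), m = c * n i ∧ 0 < c ∧
      (∃ x y : ℕ, c * n i = x * n (i + 1) + y * n (i + 2)) ∧
      ∀ c', 0 < c' → (∃ x y : ℕ, c' * n i = x * n (i + 1) + y * n (i + 2)) → c ≤ c' :=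
  betti_of_three_generated_general n hge
end

section
/- Fix k ≥ 3, let S = ⟨n_1, n_2, n_3⟩ = ⟨2k+1, 6k-5, 6k-1⟩, and for 0 ≤ j ≤ k-2 set s_j = 6k² + (6j+1)k - 5j - 5. Then s_j has exactly j+2 factorizations: (0, k+1+j, 0) and (3k-1-3i, j+1-i, 2i-1) for 1 ≤ i ≤ j+1. -/
/-!
Write `m = 6k - 5`, so that `s_j = (k + 1 + j) m`. Since `3 (2k + 1) = m + 8` and `6k - 1 = m + 4`,
three times a factorization equation `a (2k+1) + b m + c (6k-1) = s_j` shows that `m ∣ 4 (2a + 3c)`,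
hence `m ∣ 2a + 3c` as `m` is odd. Comparing sizes, `(2a + 3c)(2k + 1) ≤ 2 s_j < 2 m (2k + 1)`
because `j ≤ k - 2`, so `2a + 3c` is `0` or `m`. The first case gives `(0, k + 1 + j, 0)`; in the
second `c = 2i - 1` is odd, `a = 3k - 1 - 3i`, and `a (2k + 1) + c (6k - 1) = (k + i) m` leaves
`b = j + 1 - i`.
-/

lemma mem_Zset_fin_three {x y z n : ℕ} {v : Fin 3 → ℕ} :
    v ∈ Zset ![x, y, z] n ↔ v 0 * x + v 1 * y + v 2 * z = n := by
  simp [Zset, Fin.sum_univ_three, add_assoc]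

namespace FactorizationsOfSj

variable {k j a b c : ℕ}

lemma sj_eq (hk : 1 ≤ k) :
    6 * k ^ 2 + (6 * j + 1) * k - 5 * j - 5 = (k + 1 + j) * (6 * k - 5) := by
  have : 5 * j + 5 ≤ 6 * k ^ 2 + (6 * j + 1) * k := by nlinarith
  rw [Nat.sub_sub]
  zify [this, (by omega : 5 ≤ 6 * k)]
  ring

lemma dvd_two_mul_add_three_mul {N : ℕ} (hk : 1 ≤ k)
    (h : a * (2 * k + 1) + b * (6 * k - 5) + c * (6 * k - 1) = N * (6 * k - 5)) :
    6 * k - 5 ∣ 2 * a + 3 * c := by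
  have hodd : Odd (6 * k - 5) := ⟨3 * k - 3, by omega⟩
  have hcop : Nat.Coprime (6 * k - 5) (2 ^ 2) := Nat.Coprime.pow_right 2 hodd.coprime_two_right
  refine hcop.dvd_of_dvd_mul_left ?_
  have h3 : (6 * k - 5) * (a + 3 * b + 3 * c) + 2 ^ 2 * (2 * a + 3 * c) =
      (6 * k - 5) * (3 * N) := by
    zify [(by omega : 5 ≤ 6 * k), (by omega : 1 ≤ 6 * k)] at h ⊢
    linear_combination 3 * h
  exact (Nat.dvd_add_right (dvd_mul_right _ _)).mp (h3 ▸ dvd_mul_right _ _)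

lemma two_mul_add_three_mul_lt (hjk : j + 2 ≤ k)
    (h : a * (2 * k + 1) + b * (6 * k - 5) + c * (6 * k - 1) = (k + 1 + j) * (6 * k - 5)) :
    2 * a + 3 * c < 2 * (6 * k - 5) := by
  refine Nat.lt_of_mul_lt_mul_right (a := 2 * k + 1) ?_
  calc (2 * a + 3 * c) * (2 * k + 1)
      ≤ 2 * (a * (2 * k + 1) + c * (6 * k - 1)) := by
        have : 3 * (2 * k + 1) ≤ 2 * (6 * k - 1) := by omega
        nlinarith
    _ ≤ 2 * ((k + 1 + j) * (6 * k - 5)) := by omega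
    _ < 2 * (6 * k - 5) * (2 * k + 1) := by
        have : 0 < 6 * k - 5 := by omega
        nlinarith

lemma ac_part_eq {i : ℕ} (hi : 1 ≤ i) (hik : i < k) :
    (3 * k - 1 - 3 * i) * (2 * k + 1) + (2 * i - 1) * (6 * k - 1) = (k + i) * (6 * k - 5) := by
  zify [(by omega : 3 * i ≤ 3 * k - 1), (by omega : 1 ≤ 3 * k), (by omega : 1 ≤ 2 * i),
    (by omega : 1 ≤ 6 * k), (by omega : 5 ≤ 6 * k)]
  ring

lemma factorization_iff (hjk : j + 2 ≤ k) :
    a * (2 * k + 1) + b * (6 * k - 5) + c * (6 * k - 1) = (k + 1 + j) * (6 * k - 5) ↔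
      (a = 0 ∧ b = k + 1 + j ∧ c = 0) ∨
        ∃ i, 1 ≤ i ∧ i ≤ j + 1 ∧ a = 3 * k - 1 - 3 * i ∧ b = j + 1 - i ∧ c = 2 * i - 1 := by
  have hm : 0 < 6 * k - 5 := by omega
  constructor
  · intro h
    obtain ⟨β, hβ⟩ := dvd_two_mul_add_three_mul (by omega) h
    have hβ2 : β < 2 := by
      have := two_mul_add_three_mul_lt hjk h
      rw [hβ, mul_comm] at this
      exact Nat.lt_of_mul_lt_mul_right this
    interval_cases β
    · obtain ⟨rfl, rfl⟩ : a = 0 ∧ c = 0 := by omega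
      simp only [zero_mul, zero_add, add_zero] at h
      exact .inl ⟨rfl, Nat.eq_of_mul_eq_mul_right hm h, rfl⟩
    · set i := (c + 1) / 2
      have hc : c = 2 * i - 1 := by omega
      have ha : a = 3 * k - 1 - 3 * i := by omega
      have hw := ac_part_eq (k := k) (i := i) (by omega) (by omega)
      rw [← ha, ← hc] at hw
      have hb : b + (k + i) = k + 1 + j :=
        Nat.eq_of_mul_eq_mul_right hm (by rw [add_mul, ← hw, ← h]; ring)
      exact .inr ⟨i, by omega, by omega, ha, by omega, hc⟩
  · rintro (⟨rfl, rfl, rfl⟩ | ⟨i, hi1, hij, rfl, rfl, rfl⟩)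
    · simp
    · rw [add_right_comm, ac_part_eq hi1 (by omega), ← add_mul]
      congr 1
      omega

lemma Zset_sj_eq (hjk : j + 2 ≤ k) :
    Zset ![2 * k + 1, 6 * k - 5, 6 * k - 1] (6 * k ^ 2 + (6 * j + 1) * k - 5 * j - 5) =
      {![0, k + 1 + j, 0]} ∪
        {v | ∃ i : ℕ, 1 ≤ i ∧ i ≤ j + 1 ∧ v = ![3 * k - 1 - 3 * i, j + 1 - i, 2 * i - 1]} := by
  ext v
  rw [mem_Zset_fin_three, sj_eq (by omega), factorization_iff hjk]
  simp [funext_iff, Fin.forall_fin_succ]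

lemma ncard_sj_factorizations :
    ({![0, k + 1 + j, 0]} ∪
        {v | ∃ i : ℕ, 1 ≤ i ∧ i ≤ j + 1 ∧ v = ![3 * k - 1 - 3 * i, j + 1 - i, 2 * i - 1]} :
          Set (Fin 3 → ℕ)).ncard = j + 2 := by
  set family : ℕ → Fin 3 → ℕ := fun i => ![3 * k - 1 - 3 * i, j + 1 - i, 2 * i - 1]
  have hfamily : {v | ∃ i : ℕ, 1 ≤ i ∧ i ≤ j + 1 ∧ v = family i} = family '' Set.Icc 1 (j + 1) := by
    ext v
    simp [eq_comm, and_assoc]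
  have hinj : family.Injective := fun i i' h => by
    have := congrFun h 2
    simp only [Matrix.cons_val, family] at this
    omega
  have hbase : ![0, k + 1 + j, 0] ∉ family '' Set.Icc 1 (j + 1) := by
    rintro ⟨i, ⟨hi, -⟩, h⟩
    have := congrFun h 2
    simp only [Matrix.cons_val, family] at this
    omega
  rw [hfamily, Set.singleton_union, Set.ncard_insert_of_notMem hbase,
    Set.ncard_image_of_injective _ hinj, Set.ncard_Icc_nat]
  omega

end FactorizationsOfSj

open FactorizationsOfSj in
/-- For k ≥ 3, 0 ≤ j ≤ k-2 and s_j = 6k² + (6j+1)k - 5j - 5, the element s_j of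
S = ⟨2k+1, 6k-5, 6k-1⟩ has exactly the j+2 factorizations (0, k+1+j, 0) and
(3k-1-3i, j+1-i, 2i-1) for 1 ≤ i ≤ j+1. -/
theorem factorizations_of_sj (k j : ℕ) (hk : 3 ≤ k) (hj : j ≤ k - 2) :
    Zset ![2 * k + 1, 6 * k - 5, 6 * k - 1] (6 * k ^ 2 + (6 * j + 1) * k - 5 * j - 5) =
      {![0, k + 1 + j, 0]} ∪
        {v | ∃ i : ℕ, 1 ≤ i ∧ i ≤ j + 1 ∧ v = ![3 * k - 1 - 3 * i, j + 1 - i, 2 * i - 1]} ∧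
    (Zset ![2 * k + 1, 6 * k - 5, 6 * k - 1]
        (6 * k ^ 2 + (6 * j + 1) * k - 5 * j - 5)).ncard = j + 2 := by
  have hset := Zset_sj_eq (show j + 2 ≤ k by omega)
  exact ⟨hset, hset ▸ ncard_sj_factorizations⟩
end

section
/- Let G be a cyclic group of order n ≥ 4 with generator g, and let S = B(G) be the block monoid of zero-sum sequences over G. The element A = (2g)² g^(2n-4) ∈ S has exactly two factorizations into minimal zero-sum sequences, namely U·W and V², where U = g^n, V = (2g)g^(n-2), W = (2g)² g^(n-4); consequently c(A) = 2. -/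
open scoped Classical

/-- A sequence over `G` (a multiset of elements of `G`) is a minimal zero-sum
sequence if it is nonempty, has sum zero, and no proper nonempty subsequence
has sum zero. These are the irreducibles of the block monoid `B(G)`. -/
def IsMinZeroSum {G : Type*} [AddCommGroup G] (s : Multiset G) : Prop :=
  s ≠ 0 ∧ s.sum = 0 ∧ ∀ t ≤ s, t.sum = 0 → t = 0 ∨ t = s

/-- The set of factorizations of a zero-sum sequence `A` into minimal zero-sum
sequences: multisets of irreducibles of `B(G)` whose product (sum) is `A`. -/
def BFact {G : Type*} [AddCommGroup G] (A : Multiset G) :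
    Set (Multiset (Multiset G)) :=
  {F | (∀ s ∈ F, IsMinZeroSum s) ∧ F.sum = A}

/-- The distance between two factorizations: the maximum of the lengths of the
parts remaining after cancelling the common irreducibles. -/
noncomputable def bdist {G : Type*} [AddCommGroup G] (F F' : Multiset (Multiset G)) : ℕ :=
  max (F - F').card (F' - F).card

/-- There is an `N`-chain of factorizations within `Z` from `a` to `b`. -/
def BIsNChain {G : Type*} [AddCommGroup G] (Z : Set (Multiset (Multiset G)))
    (N : ℕ) (a b : Multiset (Multiset G)) : Prop :=
  ∃ l : List (Multiset (Multiset G)), l.head? = some a ∧ l.getLast? = some b ∧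
    (∀ x ∈ l, x ∈ Z) ∧ l.Chain' (fun x y => bdist x y ≤ N)

/-- The catenary degree of a zero-sum sequence `A` in the block monoid: the
least `N` such that any two factorizations of `A` are joined by an `N`-chain. -/
noncomputable def bCatDeg {G : Type*} [AddCommGroup G] (A : Multiset G) : ℕ :=
  sInf {N | ∀ F ∈ BFact A, ∀ F' ∈ BFact A, BIsNChain (BFact A) N F F'}

/-!
Every subsequence of `A` has the form `(2g)^a g^b`, with sum `(2a + b) • g`; so it is zero-sum
iff `n ∣ 2a + b`. As `2a + b ≤ 2n` on subsequences of `A`, and `g^n` is a proper zero-sum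
subsequence of `A`, the minimal zero-sum subsequences of `A` are exactly those with `2a + b = n`,
i.e. `U`, `V` and `W`. The weight `2a + b` is additive, so every factorization of `A` has two
factors, and counting the copies of `2g` leaves only `U·W` and `V²`. These share no atom, so
their distance, and hence `c(A)`, is `2`.
-/

open Multiset

section Catenary

variable {G : Type*} [AddCommGroup G]

theorem bdist_self (F : Multiset (Multiset G)) : bdist F F = 0 := by
  simp [bdist]

theorem bdist_comm (F F' : Multiset (Multiset G)) : bdist F F' = bdist F' F :=
  max_comm _ _

theorem bdist_of_disjoint {F F' : Multiset (Multiset G)} (h : Disjoint F F') :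
    bdist F F' = max (card F) (card F') := by
  rw [bdist, ← sub_inter, ← sub_inter F', inter_comm F', inter_eq_zero_iff_disjoint.mpr h,
    tsub_zero, tsub_zero]

theorem bIsNChain_pair {Z : Set (Multiset (Multiset G))} {N : ℕ} {F F' : Multiset (Multiset G)}
    (hF : F ∈ Z) (hF' : F' ∈ Z) (h : bdist F F' ≤ N) : BIsNChain Z N F F' :=
  ⟨[F, F'], rfl, rfl, by simp [hF, hF'], List.isChain_pair.mpr h⟩

theorem BIsNChain.bdist_le {Z : Set (Multiset (Multiset G))} {N : ℕ}
    {F F' : Multiset (Multiset G)} (hZ : Z ⊆ {F, F'}) (h : BIsNChain Z N F F') :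
    bdist F F' ≤ N := by
  by_contra hN
  obtain ⟨l, hhead, hlast, hmem, hchain⟩ := h
  have hstay : ∀ x ∈ l, x = F := by
    refine (hchain.imp_of_mem_imp (S := fun x y => y ∈ Z ∧ bdist x y ≤ N)
      fun x y _ hy hxy => ?_).induction _ _ ?_ ?_
    · exact ⟨hmem y hy, hxy⟩
    · rintro x y ⟨hy, hxy⟩ rfl
      rcases hZ hy with rfl | rfl
      · rfl
      · exact absurd hxy hN
    · intro hl
      simpa [List.head?_eq_some_head hl] using hhead
  obtain rfl := hstay F' (List.mem_of_getLast? hlast)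
  simp [bdist_self] at hN

theorem bCatDeg_eq_bdist_of_bFact_eq_pair {A : Multiset G} {F F' : Multiset (Multiset G)}
    (h : BFact A = {F, F'}) : bCatDeg A = bdist F F' := by
  have hmem : bdist F F' ∈ {N | ∀ x ∈ BFact A, ∀ y ∈ BFact A, BIsNChain (BFact A) N x y} := by
    intro x hx y hy
    refine bIsNChain_pair hx hy ?_
    rw [h] at hx hy
    rcases hx with rfl | rfl <;> rcases hy with rfl | rfl <;> simp [bdist_self, bdist_comm]
  refine le_antisymm (Nat.sInf_le hmem) (le_csInf ⟨_, hmem⟩ fun N hN => ?_)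
  exact (hN F (by simp [h]) F' (by simp [h])).bdist_le h.subset

end Catenary

theorem Multiset.exists_eq_replicate_add_replicate_of_le {α : Type*} {x y : α} (hxy : x ≠ y) {a b : ℕ}
    {t : Multiset α} (ht : t ≤ replicate a x + replicate b y) :
    ∃ a' ≤ a, ∃ b' ≤ b, t = replicate a' x + replicate b' y := by
  have hcount := fun z => count_le_of_le z ht
  refine ⟨t.count x, by simpa [count_replicate, hxy.symm] using hcount x, t.count y,
    by simpa [count_replicate, hxy] using hcount y, ext.mpr fun z => ?_⟩
  by_cases hzx : z = x
  · simp [hzx, count_replicate, hxy.symm]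
  by_cases hzy : z = y
  · simp [hzy, count_replicate, hxy]
  simpa [count_replicate, Ne.symm hzx, Ne.symm hzy] using hcount z

section DoubleSeq

variable {G : Type*} [AddCommGroup G] {g : G}

def dblSeq (g : G) (a b : ℕ) : Multiset G :=
  replicate a ((2 : ℕ) • g) + replicate b g

theorem dblSeq_add (a b c d : ℕ) : dblSeq g a b + dblSeq g c d = dblSeq g (a + c) (b + d) := by
  simp only [dblSeq, replicate_add]
  abel

theorem dblSeq_eq_zero_iff {a b : ℕ} : dblSeq g a b = 0 ↔ a = 0 ∧ b = 0 := by
  simp [dblSeq, ← card_eq_zero]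

theorem dblSeq_le_dblSeq {a b c d : ℕ} (hac : a ≤ c) (hbd : b ≤ d) :
    dblSeq g a b ≤ dblSeq g c d :=
  add_le_add (replicate_le_replicate _ |>.mpr hac) (replicate_le_replicate _ |>.mpr hbd)

theorem sum_dblSeq_eq_zero_iff {a b : ℕ} :
    (dblSeq g a b).sum = 0 ↔ addOrderOf g ∣ 2 * a + b := by
  rw [addOrderOf_dvd_iff_nsmul_eq_zero, add_nsmul, mul_nsmul]
  simp [dblSeq]

theorem ne_zero_of_one_lt_addOrderOf (hg : 1 < addOrderOf g) : g ≠ 0 := by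
  rintro rfl
  simp at hg

theorem two_nsmul_ne_self (hg : g ≠ 0) : (2 : ℕ) • g ≠ g := by
  rwa [two_nsmul, Ne, add_eq_right]

theorem count_two_nsmul_dblSeq (hg : g ≠ 0) (a b : ℕ) :
    (dblSeq g a b).count ((2 : ℕ) • g) = a := by
  simp [dblSeq, count_replicate, (two_nsmul_ne_self hg).symm]

theorem count_self_dblSeq (hg : g ≠ 0) (a b : ℕ) : (dblSeq g a b).count g = b := by
  simp [dblSeq, count_replicate, two_nsmul_ne_self hg]

theorem dblSeq_inj (hg : g ≠ 0) {a b c d : ℕ} :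
    dblSeq g a b = dblSeq g c d ↔ a = c ∧ b = d := by
  refine ⟨fun h => ⟨?_, ?_⟩, fun ⟨hac, hbd⟩ => hac ▸ hbd ▸ rfl⟩
  · simpa [count_two_nsmul_dblSeq hg] using congrArg (count ((2 : ℕ) • g)) h
  · simpa [count_self_dblSeq hg] using congrArg (count g) h

noncomputable def dblWeight (g : G) : Multiset G →+ ℕ :=
  2 • countAddMonoidHom ((2 : ℕ) • g) + countAddMonoidHom g

theorem dblWeight_dblSeq (hg : g ≠ 0) (a b : ℕ) : dblWeight g (dblSeq g a b) = 2 * a + b := by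
  simp [dblWeight, count_two_nsmul_dblSeq hg, count_self_dblSeq hg]

theorem exists_eq_dblSeq_of_le (hg : g ≠ 0) {a b : ℕ} {t : Multiset G} (ht : t ≤ dblSeq g a b) :
    ∃ a' ≤ a, ∃ b' ≤ b, t = dblSeq g a' b' :=
  exists_eq_replicate_add_replicate_of_le (two_nsmul_ne_self hg) ht

theorem isMinZeroSum_dblSeq (hg : 1 < addOrderOf g) {a b : ℕ} (h : 2 * a + b = addOrderOf g) :
    IsMinZeroSum (dblSeq g a b) := by
  have hg0 := ne_zero_of_one_lt_addOrderOf hg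
  refine ⟨fun h0 => by rw [dblSeq_eq_zero_iff] at h0; omega, by rw [sum_dblSeq_eq_zero_iff, h], ?_⟩
  intro t ht hsum
  obtain ⟨a', ha', b', hb', rfl⟩ := exists_eq_dblSeq_of_le hg0 ht
  rw [sum_dblSeq_eq_zero_iff] at hsum
  rcases Nat.eq_zero_or_pos (2 * a' + b') with h0 | h0
  · exact Or.inl (dblSeq_eq_zero_iff.mpr (by omega))
  · have := Nat.eq_of_dvd_of_lt_two_mul h0.ne' hsum (by omega)
    exact Or.inr ((dblSeq_inj hg0).mpr (by omega))

variable {n : ℕ} (hg : addOrderOf g = n) (hn : 4 ≤ n)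
include hg hn

theorem eq_of_isMinZeroSum_le_dblSeq {t : Multiset G} (ht : t ≤ dblSeq g 2 (2 * n - 4))
    (hmin : IsMinZeroSum t) :
    t = dblSeq g 0 n ∨ t = dblSeq g 1 (n - 2) ∨ t = dblSeq g 2 (n - 4) := by
  have hg0 := ne_zero_of_one_lt_addOrderOf (g := g) (by omega)
  obtain ⟨a, ha, b, hb, rfl⟩ := exists_eq_dblSeq_of_le hg0 ht
  obtain ⟨hne, hsum, hproper⟩ := hmin
  rw [sum_dblSeq_eq_zero_iff, hg] at hsum
  rw [Ne, dblSeq_eq_zero_iff] at hne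
  have hweight : 2 * a + b = n := by
    refine Nat.eq_of_dvd_of_lt_two_mul (by omega) hsum (lt_of_le_of_ne (by omega) fun hfull => ?_)
    have hU : dblSeq g 0 n ≤ dblSeq g a b := dblSeq_le_dblSeq (Nat.zero_le _) (by omega)
    rcases hproper _ hU (by simp [sum_dblSeq_eq_zero_iff, hg]) with h0 | heq
    · rw [dblSeq_eq_zero_iff] at h0
      omega
    · rw [dblSeq_inj hg0] at heq
      omega
  interval_cases a
  · exact Or.inl ((dblSeq_inj hg0).mpr (by omega))
  · exact Or.inr (Or.inl ((dblSeq_inj hg0).mpr (by omega)))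
  · exact Or.inr (Or.inr ((dblSeq_inj hg0).mpr (by omega)))

theorem bFact_dblSeq :
    BFact (dblSeq g 2 (2 * n - 4)) =
      {{dblSeq g 0 n, dblSeq g 2 (n - 4)}, replicate 2 (dblSeq g 1 (n - 2))} := by
  have hg0 := ne_zero_of_one_lt_addOrderOf (g := g) (by omega)
  have hmin {a b : ℕ} (h : 2 * a + b = n) : IsMinZeroSum (dblSeq g a b) :=
    isMinZeroSum_dblSeq (by omega) (h.trans hg.symm)
  ext F
  constructor
  · rintro ⟨hFmin, hFsum⟩
    have hmem (s) (hs : s ∈ F) := eq_of_isMinZeroSum_le_dblSeq hg hn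
      (hFsum ▸ le_sum_of_mem hs) (hFmin s hs)
    have hcard : card F = 2 := by
      have hweights : F.map (dblWeight g) = replicate (card F) n := by
        rw [← map_const']
        refine map_congr rfl fun s hs => ?_
        rcases hmem s hs with rfl | rfl | rfl <;> rw [dblWeight_dblSeq hg0] <;> omega
      have hweight := congrArg (dblWeight g) hFsum
      rw [map_multiset_sum, hweights, sum_replicate, dblWeight_dblSeq hg0, smul_eq_mul] at hweight
      exact Nat.eq_of_mul_eq_mul_right (by omega : 0 < n) (by omega)
    obtain ⟨x, y, rfl⟩ := card_eq_two.mp hcard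
    have hcount := congrArg (count ((2 : ℕ) • g)) hFsum
    rcases hmem x (by simp) with rfl | rfl | rfl <;> rcases hmem y (by simp) with rfl | rfl | rfl <;>
      simp [count_two_nsmul_dblSeq hg0] at hcount ⊢
    exact Or.inl (pair_comm _ _)
  · rintro (rfl | rfl)
    · refine ⟨?_, ?_⟩
      · simp only [insert_eq_cons, mem_cons, mem_singleton]
        rintro s (rfl | rfl) <;> exact hmin (by omega)
      · rw [insert_eq_cons, sum_cons, sum_singleton, dblSeq_add, dblSeq_inj hg0]
        omega
    · refine ⟨fun s hs => eq_of_mem_replicate hs ▸ hmin (by omega), ?_⟩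
      rw [sum_replicate, two_nsmul, dblSeq_add, dblSeq_inj hg0]
      omega

theorem bCatDeg_dblSeq : bCatDeg (dblSeq g 2 (2 * n - 4)) = 2 := by
  have hg0 := ne_zero_of_one_lt_addOrderOf (g := g) (by omega)
  rw [bCatDeg_eq_bdist_of_bFact_eq_pair (bFact_dblSeq hg hn), bdist_of_disjoint]
  · simp
  · refine disjoint_left.mpr fun hs hV => ?_
    rw [eq_of_mem_replicate hV] at hs
    simp [dblSeq_inj hg0] at hs

end DoubleSeq

theorem catDeg_two_example_general {G : Type*} [AddCommGroup G] (n : ℕ)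
    (hn : 4 ≤ n) (g : G) (hg : addOrderOf g = n) :
    BFact (Multiset.replicate 2 ((2 : ℕ) • g) + Multiset.replicate (2 * n - 4) g) =
      {({Multiset.replicate n g,
          Multiset.replicate 2 ((2 : ℕ) • g) + Multiset.replicate (n - 4) g} :
            Multiset (Multiset G)),
        Multiset.replicate 2 (((2 : ℕ) • g) ::ₘ Multiset.replicate (n - 2) g)} ∧
    bCatDeg (Multiset.replicate 2 ((2 : ℕ) • g) + Multiset.replicate (2 * n - 4) g) = 2 := by
  have hU : replicate n g = dblSeq g 0 n := by simp [dblSeq]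
  have hV : (2 : ℕ) • g ::ₘ replicate (n - 2) g = dblSeq g 1 (n - 2) := by
    simp [dblSeq, singleton_add]
  rw [hU, hV]
  exact ⟨bFact_dblSeq hg hn, bCatDeg_dblSeq hg hn⟩

/-- For G cyclic of order n ≥ 4 with generator g, the zero-sum sequence
A = (2g)²g^(2n-4) has exactly the two factorizations U·W and V², where
U = gⁿ, V = (2g)g^(n-2), W = (2g)²g^(n-4); consequently c(A) = 2. -/
theorem catDeg_two_example {G : Type*} [AddCommGroup G] [Fintype G] (n : ℕ)
    (hn : 4 ≤ n) (hcard : Fintype.card G = n) (g : G) (hg : addOrderOf g = n) :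
    BFact (Multiset.replicate 2 ((2 : ℕ) • g) + Multiset.replicate (2 * n - 4) g) =
      {({Multiset.replicate n g,
          Multiset.replicate 2 ((2 : ℕ) • g) + Multiset.replicate (n - 4) g} :
            Multiset (Multiset G)),
        Multiset.replicate 2 (((2 : ℕ) • g) ::ₘ Multiset.replicate (n - 2) g)} ∧
    bCatDeg (Multiset.replicate 2 ((2 : ℕ) • g) + Multiset.replicate (2 * n - 4) g) = 2 :=
  catDeg_two_example_general n hn g hg
end
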